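/- Let A be a real N×n matrix, y ∈ ℝᴺ and 0 < λ < λ_max := max_{1 ≤ j ≤ n} |aⱼᵀ y| (where aⱼ is the j-th column of A). Then every minimizer x̂ ∈ ℝⁿ of the function f(x) = ½‖y − A x‖₂² + λ‖x‖₁ is nonzero. -/

import Mathlib

open Matrix BigOperators

/-- The LASSO / Basis Pursuit Denoising objective
`f(x) = ½‖y − A x‖₂² + λ‖x‖₁`. -/
noncomputable def lassoObj {N n : ℕ} (A : Matrix (Fin N) (Fin n) ℝ)
    (y : Fin N → ℝ) (lam : ℝ) (x : Fin n → ℝ) : ℝ :=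
  (1 / 2) * ∑ i, (y i - A.mulVec x i) ^ 2 + lam * ∑ j, |x j|

/-!
The origin is not a minimizer: moving from `0` along the coordinate axis `eⱼ` of a
column with `λ < |aⱼᵀ y|`, by `u = t · sign(aⱼᵀ y)`, changes the objective by
`t² ‖aⱼ‖² / 2 - t (|aⱼᵀ y| - λ)`, which is negative for small `t > 0`.
-/

theorem lassoObj_single_sub_lassoObj_zero {N n : ℕ} (A : Matrix (Fin N) (Fin n) ℝ)
    (y : Fin N → ℝ) (lam : ℝ) (j : Fin n) (u : ℝ) :
    lassoObj A y lam (Pi.single j u) - lassoObj A y lam 0 =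
      (∑ i, A i j ^ 2) / 2 * u ^ 2 - (∑ i, A i j * y i) * u + lam * |u| := by
  have h_mulVec : A *ᵥ Pi.single j u = fun i => A i j * u := by
    ext i
    simp [mulVec_single, mul_comm]
  have h_norm : ∑ k, |(Pi.single j u : Fin n → ℝ) k| = |u| := by
    rw [Fintype.sum_eq_single j fun k hk => by simp [hk], Pi.single_eq_same]
  have h_sq (i : Fin N) :
      (y i - A i j * u) ^ 2 = y i ^ 2 + (A i j ^ 2 * u ^ 2 - 2 * (A i j * y i) * u) := by
    ring
  simp only [lassoObj, h_mulVec, h_norm, h_sq, mulVec_zero, Pi.zero_apply, abs_zero,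
    Finset.sum_const_zero, sub_zero, mul_zero, add_zero, Finset.sum_add_distrib,
    Finset.sum_sub_distrib, ← Finset.sum_mul, ← Finset.mul_sum]
  ring

theorem exists_mul_sq_sub_mul_add_mul_abs_neg {a b lam : ℝ} (h : lam < |b|) :
    ∃ u : ℝ, a * u ^ 2 - b * u + lam * |u| < 0 := by
  obtain ⟨s, hs_abs, hs_b⟩ : ∃ s : ℝ, |s| = 1 ∧ b * s = |b| := by
    rcases le_total 0 b with hb | hb
    · exact ⟨1, by simp, by simp [abs_of_nonneg hb]⟩
    · exact ⟨-1, by simp, by simp [abs_of_nonpos hb]⟩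
  set t := (|b| - lam) / (|a| + 1)
  have ht : 0 < t := div_pos (by linarith) (by positivity)
  have hat : a * t < |b| - lam := by
    have : t * (|a| + 1) = |b| - lam := div_mul_cancel₀ _ (by positivity)
    nlinarith [le_abs_self a]
  refine ⟨t * s, ?_⟩
  have hs_sq : s ^ 2 = 1 := by rw [← sq_abs, hs_abs, one_pow]
  calc a * (t * s) ^ 2 - b * (t * s) + lam * |t * s|
      = t * (a * t - (|b| - lam)) := by
        rw [abs_mul, hs_abs, abs_of_pos ht, mul_pow, hs_sq, ← hs_b]; ring
    _ < 0 := mul_neg_of_pos_of_neg ht (by linarith)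

theorem exists_lassoObj_lt_lassoObj_zero {N n : ℕ} (A : Matrix (Fin N) (Fin n) ℝ)
    (y : Fin N → ℝ) {lam : ℝ} {j : Fin n} (h : lam < |∑ i, A i j * y i|) :
    ∃ x, lassoObj A y lam x < lassoObj A y lam 0 := by
  obtain ⟨u, hu⟩ := exists_mul_sq_sub_mul_add_mul_abs_neg (a := (∑ i, A i j ^ 2) / 2) h
  refine ⟨Pi.single j u, sub_neg.mp ?_⟩
  rwa [lassoObj_single_sub_lassoObj_zero]

theorem sls_stmt4_general (N n : ℕ) [NeZero n] (A : Matrix (Fin N) (Fin n) ℝ)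
    (y : Fin N → ℝ) (lam : ℝ)
    (hmax : lam < Finset.univ.sup' Finset.univ_nonempty
        fun j : Fin n => |∑ i, A i j * y i|) :
    ∀ xhat : Fin n → ℝ,
      (∀ x : Fin n → ℝ, lassoObj A y lam xhat ≤ lassoObj A y lam x) →
      xhat ≠ 0 := by
  rintro xhat hmin rfl
  obtain ⟨j, -, hj⟩ := (Finset.lt_sup'_iff _).mp hmax
  obtain ⟨x, hx⟩ := exists_lassoObj_lt_lassoObj_zero A y hj
  exact (hmin x).not_gt hx

/-- If `0 < λ < λ_max := max_j |aⱼᵀ y|`, then every minimizer of the LASSO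
objective `½‖y − A x‖₂² + λ‖x‖₁` is nonzero. -/
theorem sls_stmt4 (N n : ℕ) [NeZero n] (A : Matrix (Fin N) (Fin n) ℝ)
    (y : Fin N → ℝ) (lam : ℝ) (hlam : 0 < lam)
    (hmax : lam < Finset.univ.sup' Finset.univ_nonempty
        fun j : Fin n => |∑ i, A i j * y i|) :
    ∀ xhat : Fin n → ℝ,
      (∀ x : Fin n → ℝ, lassoObj A y lam xhat ≤ lassoObj A y lam x) →
      xhat ≠ 0 :=
  sls_stmt4_general N n A y lam hmax
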